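/- Complementarity of index coding capacity and distributed storage rate: for any directed graph G on n nodes and any nonnegative rational vector λ, 1/C(λ) = ∑_{i=1}^n λ_i − 1/R(λ), where C(λ) = sup over r with rλ integral of r / log₂ χ_f(Γ_{rλ}(G)) and R(λ) = inf over r with rλ integral of r / log₂ α(Γ_{rλ}(G)). -/

import Mathlib

/-- A `b`-fold coloring of `Γ` with `k` colors: each vertex gets a `b`-element set of
colors, adjacent vertices get disjoint sets. -/
def IsNFoldColoring {V : Type*} (Γ : SimpleGraph V) (b k : ℕ)
    (c : V → Finset (Fin k)) : Prop :=
  (∀ v, (c v).card = b) ∧ ∀ u v, Γ.Adj u v → Disjoint (c u) (c v)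

/-- The `b`-fold chromatic number `χ^(b)(Γ)`. -/
noncomputable def nfoldChromaticNumber {V : Type*} (Γ : SimpleGraph V) (b : ℕ) : ℕ :=
  sInf {k | ∃ c : V → Finset (Fin k), IsNFoldColoring Γ b k c}

/-- The fractional chromatic number `χ_f(Γ) = inf_b χ^(b)(Γ)/b`. -/
noncomputable def fracChromaticNumber {V : Type*} (Γ : SimpleGraph V) : ℝ :=
  ⨅ b : ℕ+, (nfoldChromaticNumber Γ b : ℝ) / (b : ℝ)

/-- `s` is an independent set of `Γ`. -/
def IsIndepFinset {V : Type*} (Γ : SimpleGraph V) (s : Finset V) : Prop :=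
  ∀ u ∈ s, ∀ v ∈ s, ¬ Γ.Adj u v

/-- The independence number `α(Γ)`. -/
noncomputable def indepNum {V : Type*} [Fintype V] (Γ : SimpleGraph V) : ℕ :=
  sSup {k | ∃ s : Finset V, s.card = k ∧ IsIndepFinset Γ s}

/-- `Γ` is vertex transitive. -/
def IsVertexTransitive {V : Type*} (Γ : SimpleGraph V) : Prop :=
  ∀ u v : V, ∃ σ : Γ ≃g Γ, σ u = v

/-- The confusion graph `Γ_t(G)` of the directed graph `G` on `[n]` with edge
relation `E` (an edge `i → j` means `E i j`), for the integer tuple `t`.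
Vertices are tuples `x` with `x i ∈ {0,1}^{t i}`; two tuples are adjacent iff
they are confusable at some node `j`. -/
def confusionGraph (n : ℕ) (E : Fin n → Fin n → Prop) (t : Fin n → ℕ) :
    SimpleGraph ((i : Fin n) → Fin (t i) → Bool) where
  Adj x z := ∃ j, x j ≠ z j ∧ ∀ i, E i j → x i = z i
  symm := by
    constructor
    rintro x z ⟨j, hj, h⟩
    exact ⟨j, fun h' => hj h'.symm, fun i hi => (h i hi).symm⟩
  loopless := by
    constructor
    rintro x ⟨j, hj, -⟩
    exact hj rfl

/-- The disjunctive product of two simple graphs. -/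
def disjProd {V₁ V₂ : Type*} (Γ₁ : SimpleGraph V₁) (Γ₂ : SimpleGraph V₂) :
    SimpleGraph (V₁ × V₂) where
  Adj u v := Γ₁.Adj u.1 v.1 ∨ Γ₂.Adj u.2 v.2
  symm := by constructor; rintro u v (h | h); exacts [Or.inl h.symm, Or.inr h.symm]
  loopless := by constructor; rintro u (h | h) <;> exact h.ne rfl

/-!
Confusion graphs are Cayley graphs of the elementary abelian 2-group of their vertex tuples,
so the translates of a maximum independent set form an `α`-fold colouring with `|V|` colours;
together with the double-counting bound `b |V| ≤ χ^(b) α` this gives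
`χ_f(Γ_t) = 2 ^ (∑ t) / α(Γ_t)`.

Writing `Λ = ∑ λᵢ` and `y_r = log₂ α(Γ_{rλ}) / r`, the capacity set is `{(Λ - y_r)⁻¹}` and the
storage set is `{y_r⁻¹}`, so both sides equal `Λ - sup_r y_r` as soon as either `0 < y_r < Λ` for
all `r`, or `y_r` does not depend on `r`. One of the two always holds: `α(Γ_{rλ}) = 2 ^ (r Λ)` iff
every node in the support of `λ` has a loop, and `α(Γ_{rλ}) ≥ 2` iff the support contains a
nonempty set in which every node has an in-neighbour, i.e. a directed cycle.
-/

section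

open Set

theorem Real.sInf_image_inv {F : Set ℝ} (hne : F.Nonempty) (hbdd : BddAbove F)
    (hpos : F ⊆ Ioi 0) : sInf (Inv.inv '' F) = (sSup F)⁻¹ := by
  obtain ⟨y, hy⟩ := hne
  have hS : 0 < sSup F := (hpos hy).trans_le (le_csSup hbdd hy)
  refine (AntitoneOn.map_csSup_of_continuousWithinAt
    (continuousAt_inv₀ hS.ne').continuousWithinAt ?_ ⟨y, hy⟩ hbdd).symm
  exact fun a ha b _ hab => inv_anti₀ (hpos ha) hab

theorem Real.sSup_image_inv_sub {F : Set ℝ} {Λ : ℝ} (hne : F.Nonempty) (hlt : F ⊆ Iio Λ) :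
    sSup ((fun y => (Λ - y)⁻¹) '' F) = (Λ - sSup F)⁻¹ := by
  have hbdd : BddAbove F := ⟨Λ, fun y hy => (hlt hy).le⟩
  rcases (csSup_le hne fun y hy => (hlt hy).le).lt_or_eq with hS | hS
  · refine (MonotoneOn.map_csSup_of_continuousWithinAt ?_ ?_ hne hbdd).symm
    · exact ((continuousAt_const.sub continuousAt_id).inv₀
        (sub_ne_zero.2 hS.ne')).continuousWithinAt
    · intro a _ b hb hab
      exact inv_anti₀ (sub_pos.2 (hlt hb)) (by linarith)
  · -- the image is unbounded, so both sides are the junk value `0`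
    rw [hS, sub_self, inv_zero]
    refine Real.sSup_of_not_bddAbove fun ⟨c, hc⟩ => ?_
    obtain ⟨y, hy⟩ := hne
    have hc0 : 0 < c := (inv_pos.2 (sub_pos.2 (hlt hy))).trans_le (hc ⟨y, hy, rfl⟩)
    have : sSup F ≤ Λ - c⁻¹ := csSup_le ⟨y, hy⟩ fun z hz => by
      have := inv_anti₀ (inv_pos.2 (sub_pos.2 (hlt hz))) (hc ⟨z, hz, rfl⟩)
      rw [inv_inv] at this
      linarith
    linarith [inv_pos.2 hc0]

theorem one_div_sSup_image_inv_sub_eq {ι : Type*} {A : Set ι} (hA : A.Nonempty) (y : ι → ℝ)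
    {Λ : ℝ} (hy : (∀ r ∈ A, y r ∈ Ioo 0 Λ) ∨ ∃ c, ∀ r ∈ A, y r = c) :
    1 / sSup ((fun r => (Λ - y r)⁻¹) '' A) = Λ - 1 / sInf ((fun r => (y r)⁻¹) '' A) := by
  rcases hy with hIoo | ⟨c, hc⟩
  · have hne : (y '' A).Nonempty := hA.image y
    have hsub : y '' A ⊆ Ioo 0 Λ := image_subset_iff.2 hIoo
    rw [← image_image (fun z => (Λ - z)⁻¹) y A, ← image_image Inv.inv y A,
      Real.sSup_image_inv_sub hne (hsub.trans Ioo_subset_Iio_self),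
      Real.sInf_image_inv hne ⟨Λ, fun z hz => (hsub hz).2.le⟩ (hsub.trans Ioo_subset_Ioi_self)]
    simp only [one_div, inv_inv]
  · rw [image_congr fun r hr => by rw [hc r hr], hA.image_const,
      image_congr fun r hr => by rw [hc r hr], hA.image_const]
    simp only [csSup_singleton, csInf_singleton, one_div, inv_inv]

end

theorem Rat.den_natCast_mul_eq_one_of_dvd {q : ℚ} {r : ℕ} (h : q.den ∣ r) :
    ((r : ℚ) * q).den = 1 := by
  obtain ⟨c, rfl⟩ := h
  have : ((q.den * c : ℕ) : ℚ) * q = ((c * q.num : ℤ) : ℚ) := by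
    push_cast
    rw [← Rat.mul_den_eq_num]
    ring
  rw [this, Rat.den_intCast]

theorem Set.setOf_exists_and_and_eq_image {ι α : Type*} {p q : ι → Prop} {f g : ι → α}
    (h : ∀ r, p r → q r → f r = g r) :
    {x | ∃ r, p r ∧ q r ∧ x = f r} = g '' {r | p r ∧ q r} := by
  ext x
  constructor
  · rintro ⟨r, hp, hq, rfl⟩
    exact ⟨r, ⟨hp, hq⟩, (h r hp hq).symm⟩
  · rintro ⟨r, ⟨hp, hq⟩, rfl⟩
    exact ⟨r, hp, hq, (h r hp hq).symm⟩

section IndepNum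

variable {V : Type*} {Γ : SimpleGraph V}

theorem isIndepFinset_pair [DecidableEq V] {x z : V} (h : ¬Γ.Adj x z) :
    IsIndepFinset Γ {x, z} := by
  simp only [IsIndepFinset, Finset.mem_insert, Finset.mem_singleton]
  rintro u (rfl | rfl) v (rfl | rfl) huv
  exacts [huv.ne rfl, h huv, h huv.symm, huv.ne rfl]

variable [Fintype V]

variable (Γ) in
theorem bddAbove_indepFinset_cards :
    BddAbove {k | ∃ s : Finset V, s.card = k ∧ IsIndepFinset Γ s} :=
  ⟨Fintype.card V, by rintro k ⟨s, rfl, -⟩; exact s.card_le_univ⟩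

variable (Γ) in
theorem exists_isIndepFinset_card_eq_indepNum :
    ∃ s : Finset V, s.card = indepNum Γ ∧ IsIndepFinset Γ s := by
  refine Nat.sSup_mem ?_ (bddAbove_indepFinset_cards Γ)
  exact ⟨0, ∅, rfl, fun u hu => absurd hu (Finset.notMem_empty u)⟩

theorem IsIndepFinset.card_le_indepNum {s : Finset V} (hs : IsIndepFinset Γ s) :
    s.card ≤ indepNum Γ :=
  le_csSup (bddAbove_indepFinset_cards Γ) ⟨s, rfl, hs⟩

theorem one_le_indepNum [Nonempty V] : 1 ≤ indepNum Γ := by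
  classical
  simpa using (isIndepFinset_pair (Γ.loopless.irrefl (Classical.arbitrary V))).card_le_indepNum

theorem two_le_indepNum_iff : 2 ≤ indepNum Γ ↔ ∃ x z, x ≠ z ∧ ¬Γ.Adj x z := by
  classical
  constructor
  · intro h
    obtain ⟨s, hcard, hs⟩ := exists_isIndepFinset_card_eq_indepNum Γ
    obtain ⟨x, hx, z, hz, hxz⟩ := Finset.one_lt_card.1 (hcard ▸ h)
    exact ⟨x, z, hxz, hs x hx z hz⟩
  · rintro ⟨x, z, hxz, h⟩
    simpa [Finset.card_pair hxz] using (isIndepFinset_pair h).card_le_indepNum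

theorem indepNum_lt_card_of_adj {u v : V} (huv : Γ.Adj u v) : indepNum Γ < Fintype.card V := by
  obtain ⟨s, hcard, hs⟩ := exists_isIndepFinset_card_eq_indepNum Γ
  have hu : u ∉ s ∨ v ∉ s := by
    by_contra! h
    exact hs u h.1 v h.2 huv
  rw [← hcard, ← Finset.card_univ]
  refine Finset.card_lt_card (Finset.ssubset_univ_iff.2 fun hs => ?_)
  rcases hu with hu | hu <;> exact hu (hs ▸ Finset.mem_univ _)

theorem indepNum_eq_card_of_forall_not_adj (h : ∀ u v, ¬Γ.Adj u v) :
    indepNum Γ = Fintype.card V := by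
  obtain ⟨s, hcard, -⟩ := exists_isIndepFinset_card_eq_indepNum Γ
  refine le_antisymm (hcard ▸ s.card_le_univ) ?_
  simpa using (show IsIndepFinset Γ Finset.univ from fun u _ v _ => h u v).card_le_indepNum

end IndepNum

section FractionalChromatic

variable {V : Type*} [Fintype V] {Γ : SimpleGraph V}

theorem IsNFoldColoring.mul_card_le_mul_indepNum {b k : ℕ} {c : V → Finset (Fin k)}
    (hc : IsNFoldColoring Γ b k c) : b * Fintype.card V ≤ k * indepNum Γ := by
  classical
  let colors : V → Fin k → Prop := fun v g => g ∈ c v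
  have hclass : ∀ g, (Finset.univ.bipartiteBelow colors g).card ≤ indepNum Γ := fun g =>
    IsIndepFinset.card_le_indepNum fun u hu v hv huv =>
      Finset.disjoint_left.1 (hc.2 u v huv) (Finset.mem_filter.1 hu).2 (Finset.mem_filter.1 hv).2
  calc b * Fintype.card V = ∑ v, (Finset.univ.bipartiteAbove colors v).card := by
        simp [Finset.bipartiteAbove, colors, hc.1, mul_comm]
    _ = ∑ g, (Finset.univ.bipartiteBelow colors g).card :=
        Finset.sum_card_bipartiteAbove_eq_sum_card_bipartiteBelow colors
    _ ≤ ∑ _g : Fin k, indepNum Γ := Finset.sum_le_sum fun g _ => hclass g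
    _ = k * indepNum Γ := by simp

variable (Γ) in
theorem exists_isNFoldColoring_mul_card (b : ℕ) :
    ∃ c, IsNFoldColoring Γ b (b * Fintype.card V) c := by
  let e : Fin b × V ↪ Fin (b * Fintype.card V) :=
    ((Equiv.refl _).prodCongr (Fintype.equivFin V)).trans finProdFinEquiv |>.toEmbedding
  refine ⟨fun v => Finset.univ.map ((Function.Embedding.sectL (Fin b) v).trans e), by simp, ?_⟩
  intro u v huv
  simp only [Finset.disjoint_left, Finset.mem_map]
  rintro _ ⟨i, -, rfl⟩ ⟨j, -, h⟩
  exact huv.ne (Prod.ext_iff.1 (e.injective h)).2.symm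

theorem mul_card_le_nfoldChromaticNumber_mul_indepNum (b : ℕ) :
    b * Fintype.card V ≤ nfoldChromaticNumber Γ b * indepNum Γ := by
  obtain ⟨c, hc⟩ := Nat.sInf_mem (s := {k | ∃ c : V → Finset (Fin k), IsNFoldColoring Γ b k c})
    ⟨_, exists_isNFoldColoring_mul_card Γ b⟩
  exact hc.mul_card_le_mul_indepNum

theorem fracChromaticNumber_eq_card_div_indepNum [Nonempty V]
    (h : nfoldChromaticNumber Γ (indepNum Γ) ≤ Fintype.card V) :
    fracChromaticNumber Γ = Fintype.card V / indepNum Γ := by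
  have hα : (0 : ℝ) < indepNum Γ := by exact_mod_cast one_le_indepNum
  have hbdd : BddBelow (Set.range fun b : ℕ+ => (nfoldChromaticNumber Γ b : ℝ) / b) :=
    ⟨0, by rintro _ ⟨b, rfl⟩; positivity⟩
  refine le_antisymm ?_ (le_ciInf fun b => ?_)
  · calc fracChromaticNumber Γ ≤ (nfoldChromaticNumber Γ (indepNum Γ) : ℝ) / indepNum Γ :=
          ciInf_le hbdd ⟨indepNum Γ, one_le_indepNum⟩
      _ ≤ Fintype.card V / indepNum Γ := by gcongr
  · rw [div_le_div_iff₀ hα (by exact_mod_cast b.pos)]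
    have := mul_card_le_nfoldChromaticNumber_mul_indepNum (Γ := Γ) b
    rw [mul_comm] at this
    exact_mod_cast this

end FractionalChromatic

theorem nfoldChromaticNumber_indepNum_le_card {V : Type*} [AddCommGroup V] [Fintype V]
    {Γ : SimpleGraph V} (h : ∀ x z w, Γ.Adj x z → Γ.Adj (x + w) (z + w)) :
    nfoldChromaticNumber Γ (indepNum Γ) ≤ Fintype.card V := by
  obtain ⟨S, hcard, hS⟩ := exists_isIndepFinset_card_eq_indepNum Γ
  let e := Fintype.equivFin V
  -- the colour classes are the translates `g + S` of a maximum independent set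
  refine Nat.sInf_le ⟨fun v => S.map ((Equiv.subLeft v).trans e).toEmbedding, by simp [hcard], ?_⟩
  intro u v huv
  simp only [Finset.disjoint_left, Finset.mem_map, Equiv.coe_toEmbedding, Equiv.trans_apply,
    Equiv.subLeft_apply]
  rintro _ ⟨s, hs, rfl⟩ ⟨s', hs', hs's⟩
  have hsub : u - s = v - s' := (e.injective hs's).symm
  have hv : v + (s - u) = s' := by rw [← sub_sub_cancel v s', ← hsub]; abel
  exact hS s hs s' hs' (by simpa only [add_sub_cancel, hv] using h u v (s - u) huv)

/-- Equivalently (follow in-neighbours inside the finite set `D`), the nodes satisfying `P`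
carry a directed cycle of `E`. -/
def ContainsDirectedCycle {n : ℕ} (E : Fin n → Fin n → Prop) (P : Fin n → Prop) : Prop :=
  ∃ D : Finset (Fin n), D.Nonempty ∧ (∀ j ∈ D, P j) ∧ ∀ j ∈ D, ∃ i ∈ D, E i j

section ConfusionGraph

variable {n : ℕ} {E : Fin n → Fin n → Prop} {t : Fin n → ℕ}

theorem confusionGraph_adj_add {x z : (i : Fin n) → Fin (t i) → Bool} (w)
    (h : (confusionGraph n E t).Adj x z) : (confusionGraph n E t).Adj (x + w) (z + w) := by
  obtain ⟨j, hj, hE⟩ := h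
  exact ⟨j, by simpa using hj, fun i hi => by simp [hE i hi]⟩

theorem card_confusionGraph_vertices :
    Fintype.card ((i : Fin n) → Fin (t i) → Bool) = 2 ^ ∑ i, t i := by
  simp [Finset.prod_pow_eq_pow_sum]

variable (E t) in
theorem logb_fracChromaticNumber_confusionGraph :
    Real.logb 2 (fracChromaticNumber (confusionGraph n E t)) =
      ∑ i, (t i : ℝ) - Real.logb 2 (indepNum (confusionGraph n E t)) := by
  have hα : (indepNum (confusionGraph n E t) : ℝ) ≠ 0 :=
    Nat.cast_ne_zero.2 (Nat.one_le_iff_ne_zero.1 one_le_indepNum)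
  rw [fracChromaticNumber_eq_card_div_indepNum
      (nfoldChromaticNumber_indepNum_le_card fun _ _ => confusionGraph_adj_add),
    Real.logb_div (by positivity) hα, card_confusionGraph_vertices, Nat.cast_pow, Nat.cast_two,
    Real.logb_pow, Real.logb_self_eq_one one_lt_two, mul_one, Nat.cast_sum]

theorem pos_of_apply_ne {x z : (i : Fin n) → Fin (t i) → Bool} {j : Fin n} (h : x j ≠ z j) :
    0 < t j := by
  by_contra! h0
  exact h (funext fun b => absurd b.2 (by omega))

def onesOn (t : Fin n → ℕ) (D : Finset (Fin n)) : (i : Fin n) → Fin (t i) → Bool :=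
  fun i _ => decide (i ∈ D)

theorem onesOn_apply_ne_zero_iff {D : Finset (Fin n)} (hD : ∀ j ∈ D, 0 < t j) (i : Fin n) :
    onesOn t D i ≠ 0 ↔ i ∈ D := by
  refine ⟨fun h => ?_, fun hi h => ?_⟩
  · by_contra hi
    exact h (funext fun _ => by simp [onesOn, hi, Bool.zero_eq_false])
  · simpa [onesOn, hi] using congrFun h ⟨0, hD i hi⟩

theorem exists_adj_confusionGraph_iff :
    (∃ x z, (confusionGraph n E t).Adj x z) ↔ ∃ j, 0 < t j ∧ ¬E j j := by
  refine ⟨fun ⟨x, z, j, hj, hE⟩ => ⟨j, pos_of_apply_ne hj, fun hjj => hj (hE j hjj)⟩, ?_⟩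
  rintro ⟨j, hj, hjj⟩
  have hne := onesOn_apply_ne_zero_iff (t := t) (D := {j}) (by simpa using hj)
  refine ⟨onesOn t {j}, 0, j, (hne j).2 (Finset.mem_singleton_self j), fun i hi => ?_⟩
  by_contra h
  exact hjj (Finset.mem_singleton.1 ((hne i).1 h) ▸ hi)

theorem two_le_indepNum_confusionGraph_iff :
    2 ≤ indepNum (confusionGraph n E t) ↔ ContainsDirectedCycle E (0 < t ·) := by
  classical
  rw [two_le_indepNum_iff]
  constructor
  · rintro ⟨x, z, hxz, hadj⟩
    refine ⟨({j | x j ≠ z j} : Finset (Fin n)), ?_,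
      fun j hj => pos_of_apply_ne (Finset.mem_filter.1 hj).2, ?_⟩
    · obtain ⟨j, hj⟩ := Function.ne_iff.1 hxz
      exact ⟨j, Finset.mem_filter.2 ⟨Finset.mem_univ j, hj⟩⟩
    · intro j hj
      simp only [confusionGraph, not_exists, not_and, not_forall] at hadj
      obtain ⟨i, hi, hne⟩ := hadj j (Finset.mem_filter.1 hj).2
      exact ⟨i, Finset.mem_filter.2 ⟨Finset.mem_univ i, hne⟩, hi⟩
  · rintro ⟨D, ⟨j, hj⟩, hpos, hcyc⟩
    have hne := onesOn_apply_ne_zero_iff hpos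
    refine ⟨onesOn t D, 0, Function.ne_iff.2 ⟨j, (hne j).2 hj⟩, fun ⟨k, hk, hE⟩ => ?_⟩
    obtain ⟨i, hi, hik⟩ := hcyc k ((hne k).1 hk)
    exact (hne i).2 hi (hE i hik)

theorem indepNum_confusionGraph_eq_card (h : ¬∃ j, 0 < t j ∧ ¬E j j) :
    indepNum (confusionGraph n E t) = 2 ^ ∑ i, t i := by
  rw [← card_confusionGraph_vertices]
  exact indepNum_eq_card_of_forall_not_adj fun u v huv =>
    h (exists_adj_confusionGraph_iff.1 ⟨u, v, huv⟩)

theorem indepNum_confusionGraph_eq_one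
    (h : ¬ContainsDirectedCycle E (0 < t ·)) :
    indepNum (confusionGraph n E t) = 1 := by
  rw [← two_le_indepNum_confusionGraph_iff, not_le] at h
  exact le_antisymm (Nat.le_of_lt_succ h) one_le_indepNum

theorem logb_indepNum_confusionGraph_mem_Ioo (hloop : ∃ j, 0 < t j ∧ ¬E j j)
    (hcyc : ContainsDirectedCycle E (0 < t ·)) :
    Real.logb 2 (indepNum (confusionGraph n E t)) ∈ Set.Ioo 0 (∑ i, (t i : ℝ)) := by
  have h2 : (2 : ℝ) ≤ indepNum (confusionGraph n E t) := by
    exact_mod_cast two_le_indepNum_confusionGraph_iff.2 hcyc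
  obtain ⟨u, v, huv⟩ := exists_adj_confusionGraph_iff.2 hloop
  have hlt : (indepNum (confusionGraph n E t) : ℝ) < 2 ^ ∑ i, t i := by
    exact_mod_cast card_confusionGraph_vertices (t := t) ▸ indepNum_lt_card_of_adj huv
  refine ⟨Real.logb_pos one_lt_two (by linarith), ?_⟩
  calc Real.logb 2 (indepNum (confusionGraph n E t)) < Real.logb 2 (2 ^ ∑ i, t i) :=
        Real.logb_lt_logb one_lt_two (by linarith) hlt
    _ = ∑ i, (t i : ℝ) := by
        rw [Real.logb_pow, Real.logb_self_eq_one one_lt_two, mul_one, Nat.cast_sum]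

end ConfusionGraph

section ScaledConfusionGraphs

variable {n : ℕ} (E : Fin n → Fin n → Prop) (lam : Fin n → ℚ)

/-- This is `rλ` only when `rλ` is integral and `λ ≥ 0`; otherwise a junk value. -/
abbrev scaledTuple (r : ℕ) : Fin n → ℕ := fun i => ((r : ℚ) * lam i).num.toNat

def admissibleScales : Set ℕ := {r | 0 < r ∧ ∀ i, ((r : ℚ) * lam i).den = 1}

/-- The reciprocal of the storage rate at scale `r`. -/
noncomputable def normalizedLogIndepNum (r : ℕ) : ℝ :=
  Real.logb 2 (indepNum (confusionGraph n E (scaledTuple lam r))) / r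

theorem admissibleScales_nonempty : (admissibleScales lam).Nonempty :=
  ⟨∏ i, (lam i).den, Finset.prod_pos fun i _ => (lam i).den_pos,
    fun i => Rat.den_natCast_mul_eq_one_of_dvd (Finset.dvd_prod_of_mem _ (Finset.mem_univ i))⟩

variable {lam}

theorem scaledTuple_pos_iff {r : ℕ} (hr : 0 < r) (i : Fin n) :
    0 < scaledTuple lam r i ↔ 0 < lam i := by
  rw [scaledTuple, Int.lt_toNat, Nat.cast_zero, Rat.num_pos,
    mul_pos_iff_of_pos_left (Nat.cast_pos.2 hr)]

theorem sum_scaledTuple (hlam : ∀ i, 0 ≤ lam i) {r : ℕ} (hr : r ∈ admissibleScales lam) :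
    ∑ i, (scaledTuple lam r i : ℝ) = r * ∑ i, (lam i : ℝ) := by
  rw [Finset.mul_sum]
  refine Finset.sum_congr rfl fun i _ => ?_
  have hnum : 0 ≤ ((r : ℚ) * lam i).num := Rat.num_nonneg.2 (by have := hlam i; positivity)
  have : ((scaledTuple lam r i : ℤ) : ℚ) = r * lam i := by
    rw [scaledTuple, Int.toNat_of_nonneg hnum, Rat.coe_int_num_of_den_eq_one (hr.2 i)]
  exact_mod_cast this

theorem logb_fracChromaticNumber_scaled (hlam : ∀ i, 0 ≤ lam i) {r : ℕ}
    (hr : r ∈ admissibleScales lam) :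
    Real.logb 2 (fracChromaticNumber (confusionGraph n E (scaledTuple lam r))) =
      r * (∑ i, (lam i : ℝ) - normalizedLogIndepNum E lam r) := by
  have hr0 : (r : ℝ) ≠ 0 := Nat.cast_ne_zero.2 hr.1.ne'
  rw [logb_fracChromaticNumber_confusionGraph, sum_scaledTuple hlam hr, normalizedLogIndepNum]
  field_simp

/-- Whether `α(Γ_{rλ})` is `1`, `2 ^ (r ∑ λ)` or strictly in between depends only on the
support of `λ`, hence not on `r`. -/
theorem normalizedLogIndepNum_trichotomy (hlam : ∀ i, 0 ≤ lam i) :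
    (∀ r ∈ admissibleScales lam, normalizedLogIndepNum E lam r ∈ Set.Ioo 0 (∑ i, (lam i : ℝ))) ∨
      ∃ c, ∀ r ∈ admissibleScales lam, normalizedLogIndepNum E lam r = c := by
  by_cases hloop : ∃ j, 0 < lam j ∧ ¬E j j
  · by_cases hcyc : ContainsDirectedCycle E (0 < lam ·)
    · refine Or.inl fun r hr => ?_
      simp only [← scaledTuple_pos_iff hr.1] at hloop hcyc
      have hr0 : (0 : ℝ) < r := Nat.cast_pos.2 hr.1
      obtain ⟨hpos, hlt⟩ := logb_indepNum_confusionGraph_mem_Ioo hloop hcyc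
      rw [sum_scaledTuple hlam hr] at hlt
      exact ⟨div_pos hpos hr0, (div_lt_iff₀ hr0).2 (by linarith)⟩
    · refine Or.inr ⟨0, fun r hr => ?_⟩
      simp only [← scaledTuple_pos_iff hr.1] at hcyc
      simp [normalizedLogIndepNum, indepNum_confusionGraph_eq_one hcyc]
  · refine Or.inr ⟨∑ i, (lam i : ℝ), fun r hr => ?_⟩
    simp only [← scaledTuple_pos_iff hr.1] at hloop
    have hr0 : (r : ℝ) ≠ 0 := Nat.cast_ne_zero.2 hr.1.ne'
    rw [normalizedLogIndepNum, indepNum_confusionGraph_eq_card hloop, Nat.cast_pow, Nat.cast_two,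
      Real.logb_pow, Real.logb_self_eq_one one_lt_two, mul_one, Nat.cast_sum,
      sum_scaledTuple hlam hr]
    field_simp

end ScaledConfusionGraphs

theorem capacity_storage_complementarity (n : ℕ) (E : Fin n → Fin n → Prop)
    (lam : Fin n → ℚ) (hlam : ∀ i, 0 ≤ lam i) :
    1 / sSup {x : ℝ | ∃ r : ℕ, 0 < r ∧ (∀ i, ((r : ℚ) * lam i).den = 1) ∧
        x = (r : ℝ) / Real.logb 2 (fracChromaticNumber
              (confusionGraph n E (fun i => ((r : ℚ) * lam i).num.toNat)))}
      = (∑ i, (lam i : ℝ)) -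
        1 / sInf {x : ℝ | ∃ r : ℕ, 0 < r ∧ (∀ i, ((r : ℚ) * lam i).den = 1) ∧
            x = (r : ℝ) / Real.logb 2 ((indepNum
              (confusionGraph n E (fun i => ((r : ℚ) * lam i).num.toNat)) : ℝ))} := by
  rw [Set.setOf_exists_and_and_eq_image
      (g := fun r => (∑ i, (lam i : ℝ) - normalizedLogIndepNum E lam r)⁻¹) ?capacity,
    Set.setOf_exists_and_and_eq_image (g := fun r => (normalizedLogIndepNum E lam r)⁻¹) ?storage]
  case capacity =>
    intro r hr hden
    rw [logb_fracChromaticNumber_scaled E hlam ⟨hr, hden⟩,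
      div_mul_cancel_left₀ (Nat.cast_ne_zero.2 hr.ne')]
  case storage => exact fun r _ _ => (inv_div _ _).symm
  exact one_div_sSup_image_inv_sub_eq (admissibleScales_nonempty lam) _
    (normalizedLogIndepNum_trichotomy E hlam)
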